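/- For n ≥ 1, let X_n = { x ∈ [0,1]ⁿ : at most one coordinate x_i lies in {0,1} } (the n-cube with all faces of codimension at least two removed) and let S_n = { x ∈ [0,1]ⁿ : at most one coordinate x_i differs from 1/2 } (the star joining the center (1/2,…,1/2) of the cube to the centers of its 2n facets). Then S_n ⊆ X_n and there is a strong deformation retraction of X_n onto S_n: a continuous map F : X_n × [0,1] → X_n with F(x,0) = x for all x ∈ X_n, F(x,1) ∈ S_n for all x ∈ X_n, and F(s,t) = s for all s ∈ S_n and t ∈ [0,1]. -/

import Mathlib

/-!
Measure every coordinate by its deviation `x i - 1/2` from the centre of the cube and let `m(x)`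
be the second largest of the `|x i - 1/2|`, a continuous function of `x`. At time `t`, shrink
every deviation towards `0` by `t * m(x)` (soft thresholding). Deviations never grow, so no
coordinate reaches `{0, 1}` unless it already was there, and the path stays in the cube minus its
codimension-`≥ 2` faces. At `t = 1` every deviation except a strictly largest one has been
shrunk to `0`, so the endpoint lies on the star. Points of the star have `m(x) = 0` and stay put.
-/

/-- The `n`-cube `[0,1]ⁿ` with all faces of codimension at least two removed:
points with at most one coordinate in `{0,1}`. -/
def cubeMinusCodim2 (n : ℕ) : Set (Fin n → ℝ) :=
  {x | (∀ i, x i ∈ Set.Icc (0 : ℝ) 1) ∧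
    ∀ i j, x i ∈ ({0, 1} : Set ℝ) → x j ∈ ({0, 1} : Set ℝ) → i = j}

/-- The star `S_n` joining the center of the cube to the centers of its `2n` facets:
points of `[0,1]ⁿ` with at most one coordinate different from `1/2`. -/
def starSet (n : ℕ) : Set (Fin n → ℝ) :=
  {x | (∀ i, x i ∈ Set.Icc (0 : ℝ) 1) ∧
    ∀ i j, x i ≠ 1 / 2 → x j ≠ 1 / 2 → i = j}

open Finset NNReal

section SecondMax

variable {ι α : Type*} [Fintype ι] [LinearOrder α] [OrderBot α]

/-- The second largest value of `d`, counted with multiplicity (`⊥` if `ι` has fewer than two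
elements). -/
noncomputable def secondMax (d : ι → α) : α :=
  univ.offDiag.sup fun p => min (d p.1) (d p.2)

theorem min_le_secondMax (d : ι → α) {i j : ι} (hij : i ≠ j) :
    min (d i) (d j) ≤ secondMax d :=
  Finset.le_sup (f := fun p : ι × ι => min (d p.1) (d p.2)) (b := (i, j))
    (mem_offDiag.2 ⟨mem_univ i, mem_univ j, hij⟩)

theorem secondMax_eq_bot {d : ι → α} (hd : ∀ i j, d i ≠ ⊥ → d j ≠ ⊥ → i = j) :
    secondMax d = ⊥ := by
  refine (Finset.sup_eq_bot_iff _ _).2 fun p hp => ?_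
  by_contra h
  exact (mem_offDiag.1 hp).2.2 (hd _ _ (ne_bot_of_le_ne_bot h (min_le_left _ _))
    (ne_bot_of_le_ne_bot h (min_le_right _ _)))

theorem continuous_secondMax [TopologicalSpace α] [OrderClosedTopology α] :
    Continuous (secondMax : (ι → α) → α) :=
  Continuous.finset_sup_apply fun _ _ => by fun_prop

end SecondMax

/-- Soft thresholding: move `s` towards `0` by `c`, stopping at `0`. -/
noncomputable def shrink (c s : ℝ) : ℝ := s - max (-c) (min s c)

theorem abs_shrink {c : ℝ} (hc : 0 ≤ c) (s : ℝ) : |shrink c s| = max (|s| - c) 0 := by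
  unfold shrink
  rcases le_total s (-c) with h | h
  · rw [min_eq_left (by linarith), max_eq_left h, abs_of_nonpos (by linarith),
      abs_of_nonpos (by linarith), max_eq_left (by linarith)]
    ring
  rcases le_total s c with h' | h'
  · rw [min_eq_left h', max_eq_right h, sub_self, abs_zero, max_eq_right]
    rw [sub_nonpos, abs_le]
    exact ⟨h, h'⟩
  · rw [min_eq_right h', max_eq_right (by linarith), abs_of_nonneg (by linarith),
      abs_of_nonneg (by linarith), max_eq_left (by linarith)]

theorem abs_shrink_le {c : ℝ} (hc : 0 ≤ c) (s : ℝ) : |shrink c s| ≤ |s| := by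
  rw [abs_shrink hc]
  exact max_le (by linarith) (abs_nonneg s)

theorem lt_abs_of_shrink_ne_zero {c s : ℝ} (hc : 0 ≤ c) (h : shrink c s ≠ 0) : c < |s| := by
  rw [← abs_ne_zero, abs_shrink hc] at h
  by_contra! hs
  exact h (max_eq_right (by linarith))

@[simp]
theorem shrink_zero (s : ℝ) : shrink 0 s = s := by
  rcases le_total s 0 with h | h <;> simp [shrink, h]

@[fun_prop]
theorem Continuous.shrink {X : Type*} [TopologicalSpace X] {f g : X → ℝ} (hf : Continuous f)
    (hg : Continuous g) : Continuous fun x => shrink (f x) (g x) := by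
  unfold _root_.shrink
  fun_prop

section StarRetraction

variable {ι : Type*} [Fintype ι]

noncomputable def secondCenterDist (x : ι → ℝ) : ℝ≥0 :=
  secondMax fun i => ‖x i - 1 / 2‖₊

noncomputable def starRetraction (t : ℝ) (x : ι → ℝ) : ι → ℝ :=
  fun i => 1 / 2 + shrink (t * secondCenterDist x) (x i - 1 / 2)

@[fun_prop]
theorem continuous_secondCenterDist : Continuous (secondCenterDist : (ι → ℝ) → ℝ≥0) :=
  continuous_secondMax.comp (by fun_prop)

theorem Continuous.starRetraction {X : Type*} [TopologicalSpace X] {f : X → ℝ} {g : X → ι → ℝ}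
    (hf : Continuous f) (hg : Continuous g) : Continuous fun x => starRetraction (f x) (g x) :=
  continuous_pi fun i => by
    unfold _root_.starRetraction
    fun_prop

theorem abs_starRetraction_sub_half_le {t : ℝ} (ht : 0 ≤ t) (x : ι → ℝ) (i : ι) :
    |starRetraction t x i - 1 / 2| ≤ |x i - 1 / 2| := by
  simpa [starRetraction] using abs_shrink_le (by positivity) (x i - 1 / 2)

theorem starRetraction_eq_self {t : ℝ} {x : ι → ℝ} (h : t * secondCenterDist x = 0) :
    starRetraction t x = x := by
  ext i
  simp [starRetraction, h]

theorem secondCenterDist_eq_zero {x : ι → ℝ}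
    (hx : ∀ i j, x i ≠ 1 / 2 → x j ≠ 1 / 2 → i = j) : secondCenterDist x = 0 :=
  secondMax_eq_bot fun i j hi hj =>
    hx i j (by simpa [sub_eq_zero] using hi) (by simpa [sub_eq_zero] using hj)

theorem eq_of_starRetraction_one_ne_half (x : ι → ℝ) {i j : ι}
    (hi : starRetraction 1 x i ≠ 1 / 2) (hj : starRetraction 1 x j ≠ 1 / 2) : i = j := by
  have hlt : ∀ k, starRetraction 1 x k ≠ 1 / 2 → (secondCenterDist x : ℝ) < |x k - 1 / 2| :=
    fun k hk => by
      simpa using lt_abs_of_shrink_ne_zero (by positivity)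
        (fun h => hk (by simp [starRetraction, h]))
  by_contra hij
  have hmin := NNReal.coe_le_coe.2 (min_le_secondMax (fun k => ‖x k - 1 / 2‖₊) hij)
  simp only [NNReal.coe_min, coe_nnnorm, Real.norm_eq_abs] at hmin
  rcases min_le_iff.1 hmin with h | h
  · exact (hlt i hi).not_ge h
  · exact (hlt j hj).not_ge h

end StarRetraction

section Cube

variable {n : ℕ}

theorem abs_sub_half_le_half_iff {x : ℝ} : |x - 1 / 2| ≤ 1 / 2 ↔ x ∈ Set.Icc (0 : ℝ) 1 := by
  rw [abs_le, Set.mem_Icc]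
  constructor <;> rintro ⟨h₁, h₂⟩ <;> constructor <;> linarith

theorem abs_sub_half_eq_half_iff {x : ℝ} : |x - 1 / 2| = 1 / 2 ↔ x ∈ ({0, 1} : Set ℝ) := by
  rw [_root_.abs_eq (by norm_num : (0 : ℝ) ≤ 1 / 2), Set.mem_insert_iff, Set.mem_singleton_iff]
  constructor <;> rintro (h | h) <;> [right; left; right; left] <;> linarith

theorem mem_cubeMinusCodim2_of_abs_sub_half_le {x y : Fin n → ℝ}
    (hx : x ∈ cubeMinusCodim2 n) (hxy : ∀ i, |y i - 1 / 2| ≤ |x i - 1 / 2|) :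
    y ∈ cubeMinusCodim2 n := by
  have hxI : ∀ i, |x i - 1 / 2| ≤ 1 / 2 := fun i => abs_sub_half_le_half_iff.2 (hx.1 i)
  have hfacet : ∀ i, y i ∈ ({0, 1} : Set ℝ) → x i ∈ ({0, 1} : Set ℝ) := fun i hi =>
    abs_sub_half_eq_half_iff.1 <| le_antisymm (hxI i) <|
      (abs_sub_half_eq_half_iff.2 hi).symm.le.trans (hxy i)
  exact ⟨fun i => abs_sub_half_le_half_iff.1 ((hxy i).trans (hxI i)),
    fun i j hi hj => hx.2 i j (hfacet i hi) (hfacet j hj)⟩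

theorem starSet_subset_cubeMinusCodim2 : starSet n ⊆ cubeMinusCodim2 n := by
  have hne : ∀ {a : ℝ}, a ∈ ({0, 1} : Set ℝ) → a ≠ 1 / 2 := by
    rintro a (rfl | rfl) <;> norm_num
  exact fun x ⟨hxI, hx⟩ => ⟨hxI, fun i j hi hj => hx i j (hne hi) (hne hj)⟩

theorem starRetraction_mem_cubeMinusCodim2 {x : Fin n → ℝ} (hx : x ∈ cubeMinusCodim2 n)
    {t : ℝ} (ht : 0 ≤ t) : starRetraction t x ∈ cubeMinusCodim2 n :=
  mem_cubeMinusCodim2_of_abs_sub_half_le hx (abs_starRetraction_sub_half_le ht x)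

theorem starRetraction_one_mem_starSet {x : Fin n → ℝ} (hx : x ∈ cubeMinusCodim2 n) :
    starRetraction 1 x ∈ starSet n :=
  ⟨(starRetraction_mem_cubeMinusCodim2 hx zero_le_one).1,
    fun _ _ => eq_of_starRetraction_one_ne_half x⟩

theorem starRetraction_of_mem_starSet {x : Fin n → ℝ} (hx : x ∈ starSet n) (t : ℝ) :
    starRetraction t x = x :=
  starRetraction_eq_self (by rw [secondCenterDist_eq_zero hx.2, NNReal.coe_zero, mul_zero])

end Cube

theorem stmt5_general (n : ℕ) :
    starSet n ⊆ cubeMinusCodim2 n ∧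
    ∃ F : cubeMinusCodim2 n × unitInterval → cubeMinusCodim2 n,
      Continuous F ∧
      (∀ x, F (x, 0) = x) ∧
      (∀ x, ((F (x, 1) : cubeMinusCodim2 n) : Fin n → ℝ) ∈ starSet n) ∧
      (∀ (s : cubeMinusCodim2 n), (s : Fin n → ℝ) ∈ starSet n →
        ∀ t : unitInterval, F (s, t) = s) := by
  refine ⟨starSet_subset_cubeMinusCodim2,
    fun p => ⟨starRetraction p.2 p.1, starRetraction_mem_cubeMinusCodim2 p.1.2 p.2.2.1⟩,
    ?_, fun x => ?_, fun x => starRetraction_one_mem_starSet x.2,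
    fun s hs t => Subtype.ext (starRetraction_of_mem_starSet hs t)⟩
  · exact (Continuous.starRetraction (by fun_prop) (by fun_prop)).subtype_mk _
  · exact Subtype.ext (starRetraction_eq_self (by simp))

/-- Step 3° in the proof of Theorem 3.3: the cube minus its codimension-`≥ 2` faces
strongly deformation retracts onto the star `S_n` with `2n` leaves. -/
theorem stmt5 (n : ℕ) (hn : 1 ≤ n) :
    starSet n ⊆ cubeMinusCodim2 n ∧
    ∃ F : cubeMinusCodim2 n × unitInterval → cubeMinusCodim2 n,
      Continuous F ∧
      (∀ x, F (x, 0) = x) ∧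
      (∀ x, ((F (x, 1) : cubeMinusCodim2 n) : Fin n → ℝ) ∈ starSet n) ∧
      (∀ (s : cubeMinusCodim2 n), (s : Fin n → ℝ) ∈ starSet n →
        ∀ t : unitInterval, F (s, t) = s) :=
  stmt5_general n
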